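/- Let b be an odd positive integer and E = {1, 3, 5, ..., b}. There exists a unique matrix of rational numbers [c_{λ,β}]_{λ,β ∈ E} such that for every β ∈ E and every z, sin^b(z)·cot_β(z) = Σ_{λ ∈ E} c_{λ,β}·(e^{iλz} + e^{-iλz}). Moreover this matrix is invertible. -/

import Mathlib

open Real Polynomial

/-- `cotIter β z` is `cot_β(z) = ((-1)^(β-1)/(β-1)!) · d^{β-1}/dz^{β-1} (cot z)`. -/
noncomputable def cotIter (β : ℕ) (z : ℝ) : ℝ :=
  ((-1:ℝ)^(β-1) / (β-1).factorial) *
    iteratedDeriv (β-1) (fun t => Real.cos t / Real.sin t) z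

/-- The matrix property: for every odd `β = 2j+1 ∈ E = {1,3,…,b}` and every `z`,
`sin^b(z)·cot_β(z) = Σ_{λ∈E} c_{λ,β}·(e^{iλz} + e^{-iλz})`. -/
def SinCotMatrixProp (b : ℕ) (c : Matrix (Fin ((b+1)/2)) (Fin ((b+1)/2)) ℚ) : Prop :=
  ∀ j : Fin ((b+1)/2), ∀ z : ℝ, Real.sin z ≠ 0 →
    ((Real.sin z ^ b * cotIter (2*(j:ℕ)+1) z : ℝ) : ℂ) =
      ∑ i : Fin ((b+1)/2), (c i j : ℂ) *
        (Complex.exp ((2*(i:ℕ)+1) * z * Complex.I) +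
         Complex.exp (-((2*(i:ℕ)+1) * z * Complex.I)))

/-!
For odd `β`, `cot_β z = P_β (cot z)` with `P_β` monic of degree `β` and only odd monomials
(`P_β` comes from `(cot)' = -(1 + cot²)`). Hence `sin^b z · cot_β z = Σ_t p_t sin^(b-t) z cos^t z`
with `b - t` even, a product of powers of `sin² = (2 - 2cos 2z)/4` and `cos = (2cos z)/2`; by
`2cos(kz) · 2cos(lz) = 2cos((k+l)z) + 2cos((k-l)z)` it lies in the `ℚ`-span of the
`2cos(λz) = e^{iλz} + e^{-iλz}`, `λ ∈ E`. This gives existence. Uniqueness: `2cos(λz) = 2T_λ(cos z)`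
and Chebyshev polynomials of distinct degrees are linearly independent. Invertibility: a vector in
the kernel of `c` gives `Σ_β v_β P_β (cot z) = 0`, and the `P_β` have distinct degrees.
-/

noncomputable def cotDerivPoly : ℕ → ℚ[X]
  | 0 => X
  | k + 1 => -(1 + X ^ 2) * derivative (cotDerivPoly k)

lemma natDegree_cotDerivPoly_le (k : ℕ) : (cotDerivPoly k).natDegree ≤ k + 1 := by
  induction k with
  | zero => simp [cotDerivPoly]
  | succ k ih =>
    have h₁ : (-(1 + X ^ 2) : ℚ[X]).natDegree ≤ 2 := by
      rw [natDegree_neg]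
      exact (natDegree_add_le _ _).trans (by simp)
    have h₂ := (natDegree_derivative_le (cotDerivPoly k)).trans (Nat.sub_le_sub_right ih 1)
    exact natDegree_mul_le.trans (by omega)

lemma cotDerivPoly_succ_eq (k : ℕ) :
    cotDerivPoly (k + 1) = -derivative (cotDerivPoly k) - X ^ 2 * derivative (cotDerivPoly k) := by
  rw [cotDerivPoly]; ring

lemma coeff_cotDerivPoly_self_add_one (k : ℕ) :
    (cotDerivPoly k).coeff (k + 1) = (-1) ^ k * k.factorial := by
  induction k with
  | zero => simp [cotDerivPoly]
  | succ k ih =>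
    have hdeg : (derivative (cotDerivPoly k)).natDegree < k + 2 :=
      (natDegree_derivative_le _).trans_lt (by have := natDegree_cotDerivPoly_le k; omega)
    rw [cotDerivPoly_succ_eq, coeff_sub, coeff_neg, coeff_eq_zero_of_natDegree_lt hdeg,
      coeff_X_pow_mul, coeff_derivative, ih]
    push_cast [Nat.factorial_succ]
    ring

lemma coeff_cotDerivPoly_eq_zero_of_even {k t : ℕ} (h : Even (t + k)) :
    (cotDerivPoly k).coeff t = 0 := by
  induction k generalizing t with
  | zero =>
    rw [cotDerivPoly, coeff_X, if_neg]
    rintro rfl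
    exact Nat.not_even_one h
  | succ k ih =>
    rw [Nat.even_iff] at h
    rw [cotDerivPoly_succ_eq, coeff_sub, coeff_neg, coeff_derivative,
      ih (by rw [Nat.even_iff]; omega), zero_mul, neg_zero, zero_sub, neg_eq_zero, coeff_X_pow_mul']
    split_ifs
    · rw [coeff_derivative, ih (by rw [Nat.even_iff]; omega), zero_mul]
    · rfl

lemma iteratedDeriv_cot_eq_aeval (k : ℕ) {z : ℝ} (hz : sin z ≠ 0) :
    iteratedDeriv k (fun t => cos t / sin t) z = aeval (cos z / sin z) (cotDerivPoly k) := by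
  induction k generalizing z with
  | zero => simp [cotDerivPoly]
  | succ k ih =>
    have hcot : HasDerivAt (fun t => cos t / sin t) (-(1 + (cos z / sin z) ^ 2)) z := by
      refine ((hasDerivAt_cos z).div (hasDerivAt_sin z) hz).congr_deriv ?_
      field_simp
      ring
    have hloc : iteratedDeriv k (fun t => cos t / sin t) =ᶠ[nhds z]
        fun t => aeval (cos t / sin t) (cotDerivPoly k) :=
      Filter.eventually_of_mem ((isOpen_ne_fun continuous_sin continuous_const).mem_nhds hz)
        fun t ht => ih ht
    have hcomp : HasDerivAt (fun t => aeval (cos t / sin t) (cotDerivPoly k))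
        (aeval (cos z / sin z) (derivative (cotDerivPoly k)) * -(1 + (cos z / sin z) ^ 2)) z :=
      ((cotDerivPoly k).hasDerivAt_aeval _).comp z hcot
    rw [iteratedDeriv_succ, hloc.deriv_eq, hcomp.deriv, cotDerivPoly]
    simp only [map_mul, map_neg, map_add, map_one, map_pow, aeval_X]
    ring

noncomputable def cotPoly (k : ℕ) : ℚ[X] :=
  C ((-1) ^ k / k.factorial : ℚ) * cotDerivPoly k

lemma cotIter_succ_eq_aeval (k : ℕ) {z : ℝ} (hz : sin z ≠ 0) :
    cotIter (k + 1) z = aeval (cos z / sin z) (cotPoly k) := by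
  rw [cotIter, Nat.add_sub_cancel, iteratedDeriv_cot_eq_aeval k hz, cotPoly, map_mul, aeval_C,
    eq_ratCast]
  push_cast
  rfl

lemma natDegree_cotPoly_le (k : ℕ) : (cotPoly k).natDegree ≤ k + 1 :=
  (natDegree_C_mul_le _ _).trans (natDegree_cotDerivPoly_le k)

lemma coeff_cotPoly_self_add_one (k : ℕ) : (cotPoly k).coeff (k + 1) = 1 := by
  rw [cotPoly, coeff_C_mul, coeff_cotDerivPoly_self_add_one]
  field_simp
  rw [← pow_mul, pow_mul', neg_one_sq, one_pow]

lemma monic_cotPoly (k : ℕ) : (cotPoly k).Monic :=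
  monic_of_natDegree_le_of_coeff_eq_one _ (natDegree_cotPoly_le k) (coeff_cotPoly_self_add_one k)

lemma natDegree_cotPoly (k : ℕ) : (cotPoly k).natDegree = k + 1 :=
  natDegree_eq_of_le_of_coeff_ne_zero (natDegree_cotPoly_le k)
    (by rw [coeff_cotPoly_self_add_one]; exact one_ne_zero)

lemma coeff_cotPoly_eq_zero_of_even {k t : ℕ} (h : Even (t + k)) : (cotPoly k).coeff t = 0 := by
  rw [cotPoly, coeff_C_mul, coeff_cotDerivPoly_eq_zero_of_even h, mul_zero]

/-- The paper's `e^{ikz} + e^{-ikz}`. -/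
noncomputable def twoCos (k : ℤ) : ℝ → ℝ := fun z => 2 * cos (k * z)

lemma twoCos_neg (k : ℤ) : twoCos (-k) = twoCos k := by
  funext z
  simp [twoCos]

lemma twoCos_mul_twoCos (k l : ℤ) : twoCos k * twoCos l = twoCos (k + l) + twoCos (k - l) := by
  funext z
  simp only [twoCos, Pi.mul_apply, Pi.add_apply]
  push_cast
  rw [add_mul, sub_mul, cos_add, cos_sub]
  ring

noncomputable def cosSpan (n : ℕ) : Submodule ℚ (ℝ → ℝ) :=
  Submodule.span ℚ (twoCos '' {k | k.natAbs ≤ n ∧ Even (k + n)})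

lemma twoCos_mem_cosSpan {k : ℤ} {n : ℕ} (hk : k.natAbs ≤ n) (hkn : Even (k + n)) :
    twoCos k ∈ cosSpan n :=
  Submodule.subset_span ⟨k, ⟨hk, hkn⟩, rfl⟩

instance : SetLike.GradedMonoid cosSpan where
  one_mem := by
    have h : (1 : ℝ → ℝ) = (2⁻¹ : ℚ) • twoCos 0 := by
      funext z
      simp [twoCos, Rat.smul_def]
    rw [h]
    exact Submodule.smul_mem _ _ (twoCos_mem_cosSpan le_rfl (by simp))
  mul_mem := by
    intro m n f g hf hg
    have hle : cosSpan m * cosSpan n ≤ cosSpan (m + n) := by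
      rw [cosSpan, cosSpan, Submodule.span_mul_span, Submodule.span_le]
      rintro _ ⟨_, ⟨k, ⟨hk, hkm⟩, rfl⟩, _, ⟨l, ⟨hl, hln⟩, rfl⟩, rfl⟩
      rw [Int.even_iff] at hkm hln
      change twoCos k * twoCos l ∈ cosSpan (m + n)
      rw [twoCos_mul_twoCos]
      exact Submodule.add_mem _ (twoCos_mem_cosSpan (by omega) (by rw [Int.even_iff]; omega))
        (twoCos_mem_cosSpan (by omega) (by rw [Int.even_iff]; omega))
    exact hle (Submodule.mul_mem_mul hf hg)

lemma cosSpan_le_span_twoCos_odd {b : ℕ} (hb : Odd b) :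
    cosSpan b ≤
      Submodule.span ℚ (Set.range fun i : Fin ((b + 1) / 2) => twoCos (2 * (i : ℕ) + 1)) := by
  rw [cosSpan, Submodule.span_le]
  rintro _ ⟨k, ⟨hk, hkb⟩, rfl⟩
  obtain ⟨m, rfl⟩ := hb
  rw [Int.even_iff] at hkb
  push_cast at hkb
  rcases le_or_gt 0 k with h | h
  · exact Submodule.subset_span ⟨⟨k.toNat / 2, by omega⟩, by simp only; congr 1; omega⟩
  · rw [← twoCos_neg]
    exact Submodule.subset_span ⟨⟨(-k).toNat / 2, by omega⟩, by simp only; congr 1; omega⟩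

lemma sin_sq_mem_cosSpan : (sin ^ 2 : ℝ → ℝ) ∈ cosSpan 2 := by
  have h : (sin ^ 2 : ℝ → ℝ) = (4⁻¹ : ℚ) • (twoCos 0 - twoCos 2) := by
    funext z
    simp only [twoCos, Pi.pow_apply, Pi.smul_apply, Pi.sub_apply, Rat.smul_def]
    push_cast
    rw [zero_mul, cos_zero, cos_two_mul, cos_sq']
    ring
  rw [h]
  exact Submodule.smul_mem _ _ (Submodule.sub_mem _ (twoCos_mem_cosSpan (by simp) (by simp))
    (twoCos_mem_cosSpan le_rfl ⟨2, by norm_num⟩))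

lemma cos_mem_cosSpan : (cos : ℝ → ℝ) ∈ cosSpan 1 := by
  have h : (cos : ℝ → ℝ) = (2⁻¹ : ℚ) • twoCos 1 := by
    funext z
    simp [twoCos, Rat.smul_def]
  rw [h]
  exact Submodule.smul_mem _ _ (twoCos_mem_cosSpan le_rfl (by simp))

lemma exists_mem_cosSpan_sin_pow_mul_aeval_eq {b : ℕ} {P : ℚ[X]} (hdeg : P.natDegree ≤ b)
    (hpar : ∀ t, Odd (b + t) → P.coeff t = 0) :
    ∃ g ∈ cosSpan b, ∀ z, sin z ≠ 0 → sin z ^ b * aeval (cos z / sin z) P = g z := by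
  refine ⟨∑ t ∈ Finset.range (b + 1), P.coeff t • ((sin ^ 2) ^ ((b - t) / 2) * cos ^ t),
    Submodule.sum_mem _ fun t ht => ?_, fun z hz => ?_⟩
  · by_cases hbt : Odd (b + t)
    · rw [hpar t hbt, zero_smul]
      exact Submodule.zero_mem _
    have hmem := SetLike.mul_mem_graded (SetLike.pow_mem_graded ((b - t) / 2) sin_sq_mem_cosSpan)
      (SetLike.pow_mem_graded t cos_mem_cosSpan)
    rw [Nat.not_odd_iff_even, Nat.even_iff] at hbt
    rw [Finset.mem_range] at ht
    rw [smul_eq_mul, smul_eq_mul, show (b - t) / 2 * 2 + t * 1 = b by omega] at hmem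
    exact Submodule.smul_mem _ _ hmem
  · rw [aeval_eq_sum_range' (n := b + 1) (by omega), Finset.mul_sum, Finset.sum_apply]
    refine Finset.sum_congr rfl fun t ht => ?_
    by_cases hbt : Odd (b + t)
    · simp [hpar t hbt]
    rw [Nat.not_odd_iff_even, Nat.even_iff] at hbt
    rw [Finset.mem_range] at ht
    have hb : b = 2 * ((b - t) / 2) + t := by omega
    simp only [Pi.smul_apply, Pi.mul_apply, Pi.pow_apply, Rat.smul_def]
    conv_lhs => rw [hb, pow_add, pow_mul, div_pow]
    field_simp

lemma linearIndependent_of_injective_natDegree {K ι : Type*} [Field K] {f : ι → K[X]}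
    (hf : ∀ i, f i ≠ 0) (hinj : Function.Injective fun i => (f i).natDegree) :
    LinearIndependent K f := by
  rw [linearIndependent_iff']
  intro s g hsum i hi
  by_contra hgi
  have hdeg : ∀ j, g j ≠ 0 → (g j • f j).degree = (f j).degree := fun j hj => by
    rw [smul_eq_C_mul, degree_C_mul hj]
  have hsup := degree_sum_eq_of_disjoint (fun j => g j • f j) s (by
    rintro j ⟨-, hj⟩ l ⟨-, hl⟩ hjl hdeg_eq
    simp only [Function.comp_apply, hdeg j (left_ne_zero_of_smul hj),
      hdeg l (left_ne_zero_of_smul hl)] at hdeg_eq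
    exact hjl (hinj (natDegree_eq_of_degree_eq hdeg_eq)))
  rw [hsum, degree_zero, eq_comm, Finset.sup_eq_bot_iff] at hsup
  exact hf i (degree_eq_bot.mp (hdeg i hgi ▸ hsup i hi))

lemma eq_zero_of_aeval_eq_zero_of_infinite {K L : Type*} [Field K] [Field L] [Algebra K L]
    {p : K[X]} {s : Set L} (hs : s.Infinite) (h : ∀ x ∈ s, aeval x p = 0) : p = 0 := by
  apply map_injective (algebraMap K L) (algebraMap K L).injective
  rw [Polynomial.map_zero]
  exact eq_zero_of_infinite_isRoot _
    (hs.mono fun x hx => by simpa [IsRoot, eval_map_algebraMap] using h x hx)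

lemma exists_sin_ne_zero_cos_div_sin_eq (x : ℝ) : ∃ z, sin z ≠ 0 ∧ cos z / sin z = x := by
  refine ⟨π / 2 - arctan x, ?_, ?_⟩
  · rw [sin_pi_div_two_sub]
    exact (cos_arctan_pos x).ne'
  · rw [sin_pi_div_two_sub, cos_pi_div_two_sub, ← tan_eq_sin_div_cos, tan_arctan]

lemma exists_sin_ne_zero_cos_eq {x : ℝ} (hx : x ∈ Set.Ioo (-1) 1) :
    ∃ z, sin z ≠ 0 ∧ cos z = x := by
  refine ⟨arccos x, ?_, cos_arccos hx.1.le hx.2.le⟩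
  rw [sin_arccos]
  exact (Real.sqrt_pos.mpr (by nlinarith [hx.1, hx.2])).ne'

lemma twoCos_eq_aeval_chebyshevT (k : ℤ) (z : ℝ) :
    twoCos k z = 2 * aeval (cos z) (Chebyshev.T ℚ k) := by
  rw [twoCos, aeval_def, eval₂_eq_eval_map, Chebyshev.map_T, Chebyshev.T_real_cos]

lemma eq_zero_of_forall_sum_twoCos_odd_eq_zero {n : ℕ} (d : Fin n → ℚ)
    (h : ∀ z, sin z ≠ 0 → ∑ i, (d i : ℝ) * twoCos (2 * (i : ℕ) + 1) z = 0) : d = 0 := by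
  have hT : LinearIndependent ℚ fun i : Fin n => Chebyshev.T ℚ (2 * (i : ℕ) + 1) := by
    refine linearIndependent_of_injective_natDegree (fun i => ?_) (fun i j hij => ?_)
    · exact ne_zero_of_natDegree_gt (n := 0) (by rw [Chebyshev.natDegree_T]; omega)
    · simp only [Chebyshev.natDegree_T] at hij
      ext
      omega
  have hsum : ∑ i, d i • Chebyshev.T ℚ (2 * (i : ℕ) + 1) = 0 := by
    refine eq_zero_of_aeval_eq_zero_of_infinite (Set.Ioo_infinite (by norm_num : (-1 : ℝ) < 1))
      fun x hx => ?_
    obtain ⟨z, hz, rfl⟩ := exists_sin_ne_zero_cos_eq hx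
    have hz' := h z hz
    simp only [twoCos_eq_aeval_chebyshevT, mul_left_comm _ (2 : ℝ), ← Finset.mul_sum,
      mul_eq_zero, two_ne_zero, false_or] at hz'
    simpa only [map_sum, map_smul, Rat.smul_def] using hz'
  funext i
  exact Fintype.linearIndependent_iff.mp hT d hsum i

lemma eq_zero_of_forall_sum_sin_pow_mul_cotIter_eq_zero {n : ℕ} (b : ℕ) (v : Fin n → ℚ)
    (h : ∀ z, sin z ≠ 0 → ∑ j, (v j : ℝ) * (sin z ^ b * cotIter (2 * (j : ℕ) + 1) z) = 0) :
    v = 0 := by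
  have hP : LinearIndependent ℚ fun j : Fin n => cotPoly (2 * (j : ℕ)) := by
    refine linearIndependent_of_injective_natDegree (fun j => (monic_cotPoly _).ne_zero)
      fun i j hij => ?_
    simp only [natDegree_cotPoly] at hij
    ext
    omega
  have hsum : ∑ j, v j • cotPoly (2 * (j : ℕ)) = 0 := by
    refine eq_zero_of_aeval_eq_zero_of_infinite (Set.infinite_univ (α := ℝ)) fun x _ => ?_
    obtain ⟨z, hz, rfl⟩ := exists_sin_ne_zero_cos_div_sin_eq x
    have hz' := h z hz
    simp only [cotIter_succ_eq_aeval _ hz, mul_left_comm _ (sin z ^ b), ← Finset.mul_sum,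
      mul_eq_zero, pow_ne_zero _ hz, false_or] at hz'
    simpa only [map_sum, map_smul, Rat.smul_def] using hz'
  funext j
  exact Fintype.linearIndependent_iff.mp hP v hsum j

lemma exists_sin_pow_mul_cotIter_eq_sum_twoCos {b : ℕ} (hb : Odd b) (j : Fin ((b + 1) / 2)) :
    ∃ v : Fin ((b + 1) / 2) → ℚ, ∀ z, sin z ≠ 0 →
      sin z ^ b * cotIter (2 * (j : ℕ) + 1) z = ∑ i, (v i : ℝ) * twoCos (2 * (i : ℕ) + 1) z := by
  have hj := j.isLt
  have hb2 := Nat.odd_iff.mp hb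
  obtain ⟨g, hg, hgz⟩ := exists_mem_cosSpan_sin_pow_mul_aeval_eq
    (b := b) (P := cotPoly (2 * (j : ℕ))) (by rw [natDegree_cotPoly]; omega)
    fun t hbt => coeff_cotPoly_eq_zero_of_even (by
      rw [Nat.odd_iff] at hbt
      rw [Nat.even_iff]
      omega)
  obtain ⟨v, hv⟩ :=
    (Submodule.mem_span_range_iff_exists_fun ℚ).mp (cosSpan_le_span_twoCos_odd hb hg)
  refine ⟨v, fun z hz => ?_⟩
  rw [cotIter_succ_eq_aeval _ hz, hgz z hz, ← hv]
  simp [Finset.sum_apply, Rat.smul_def]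

lemma sinCotMatrixProp_iff {b : ℕ} (c : Matrix (Fin ((b + 1) / 2)) (Fin ((b + 1) / 2)) ℚ) :
    SinCotMatrixProp b c ↔ ∀ (j : Fin ((b + 1) / 2)) (z : ℝ), sin z ≠ 0 →
      sin z ^ b * cotIter (2 * (j : ℕ) + 1) z = ∑ i, (c i j : ℝ) * twoCos (2 * (i : ℕ) + 1) z := by
  refine forall₂_congr fun j z => imp_congr_right fun _ => ?_
  rw [← Complex.ofReal_inj]
  push_cast [twoCos]
  simp only [Complex.two_cos, neg_mul]

theorem stmt_5_general (b : ℕ) (hb : Odd b) :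
    (∃! c : Matrix (Fin ((b+1)/2)) (Fin ((b+1)/2)) ℚ, SinCotMatrixProp b c) ∧
    (∀ c : Matrix (Fin ((b+1)/2)) (Fin ((b+1)/2)) ℚ, SinCotMatrixProp b c →
      IsUnit c) := by
  simp only [sinCotMatrixProp_iff]
  choose v hv using exists_sin_pow_mul_cotIter_eq_sum_twoCos hb
  refine ⟨⟨Matrix.of fun i j => v j i, hv, fun c hc => ?_⟩, fun c hc => ?_⟩
  · ext i j
    have hcol := eq_zero_of_forall_sum_twoCos_odd_eq_zero (fun i => c i j - v j i) fun z hz => by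
      simp only [Rat.cast_sub, sub_mul, Finset.sum_sub_distrib, ← hc j z hz, ← hv j z hz, sub_self]
    exact sub_eq_zero.mp (congrFun hcol i)
  · rw [← Matrix.linearIndependent_cols_iff_isUnit, Fintype.linearIndependent_iff]
    intro w hw
    refine congrFun (eq_zero_of_forall_sum_sin_pow_mul_cotIter_eq_zero b w fun z hz => ?_)
    have hwi : ∀ i, ∑ j, (w j : ℝ) * c i j = 0 := fun i => by
      have := congrFun hw i
      simp only [Finset.sum_apply, Pi.smul_apply, Matrix.col_apply, smul_eq_mul,
        Pi.zero_apply] at this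
      exact_mod_cast this
    simp only [hc _ z hz, Finset.mul_sum]
    rw [Finset.sum_comm]
    refine Finset.sum_eq_zero fun i _ => ?_
    simp only [← mul_assoc, ← Finset.sum_mul, hwi, zero_mul]

theorem stmt_5 (b : ℕ) (hb : Odd b) (hb1 : 1 ≤ b) :
    (∃! c : Matrix (Fin ((b+1)/2)) (Fin ((b+1)/2)) ℚ, SinCotMatrixProp b c) ∧
    (∀ c : Matrix (Fin ((b+1)/2)) (Fin ((b+1)/2)) ℚ, SinCotMatrixProp b c →
      IsUnit c) :=
  stmt_5_general b hb
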